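/- The 4-uniform hypergraph H^{(4)}_{1,1,2,2}, consisting of a central 4-edge with loose paths of lengths 1, 1, 2, 2 attached to its four vertices, satisfies ρ(H^{(4)}_{1,1,2,2}) = 3!·4^{1/4} = 6·4^{1/4}. -/
import Mathlib


open Finset

/-- Spectral radius of an `r`-uniform hypergraph with edge set `E`. -/
noncomputable def specRad (r : ℕ) {V : Type} [Fintype V] (E : Finset (Finset V)) : ℝ :=
  sSup {ρ : ℝ | ∃ x : V → ℝ, (∀ v, 0 ≤ x v) ∧ x ≠ 0 ∧
    ρ = (Nat.factorial r : ℝ) * (∑ e ∈ E, ∏ v ∈ e, x v) / (∑ v, x v ^ r)}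

lemma amgm4 {V : Type} [DecidableEq V] (e : Finset V) (he : e.card = 4)
    (y : V → ℝ) (hy : ∀ u ∈ e, 0 ≤ y u) :
    ∏ u ∈ e, y u ≤ (1/4) * ∑ u ∈ e, (y u)^4 := by
  obtain ⟨a, ha⟩ : e.Nonempty := Finset.card_pos.mp (by omega)
  have h3 : (e.erase a).card = 3 := by rw [Finset.card_erase_of_mem ha, he]
  obtain ⟨b, c, d, hbc, hbd, hcd, habc⟩ := Finset.card_eq_three.mp h3
  have hab : a ∉ e.erase a := Finset.notMem_erase a e
  have hee : e = insert a {b, c, d} := by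
    rw [← habc, Finset.insert_erase ha]
  rw [habc] at hab
  simp only [Finset.mem_insert, Finset.mem_singleton, not_or] at hab
  obtain ⟨hab', hac', had'⟩ := hab
  have hya : 0 ≤ y a := hy a ha
  have hyb : 0 ≤ y b := hy b (by rw [hee]; simp)
  have hyc : 0 ≤ y c := hy c (by rw [hee]; simp)
  have hyd : 0 ≤ y d := hy d (by rw [hee]; simp)
  rw [hee]
  rw [Finset.prod_insert (by simp [hab', hac', had']),
      Finset.sum_insert (by simp [hab', hac', had']),
      Finset.prod_insert (by simp [hbc, hbd]), Finset.sum_insert (by simp [hbc, hbd]),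
      Finset.prod_insert (by simp [hcd]), Finset.sum_insert (by simp [hcd]),
      Finset.prod_singleton, Finset.sum_singleton]
  nlinarith [sq_nonneg (y a * y b - y c * y d), sq_nonneg (y a ^ 2 - y b ^ 2),
    sq_nonneg (y c ^ 2 - y d ^ 2), mul_nonneg hya hyb, mul_nonneg hyc hyd,
    sq_nonneg (y a * y b + y c * y d)]

lemma rpow_quarter_eq {a b : ℝ} (hb : 0 ≤ b) (h : b ^ 4 = a) : a ^ ((1:ℝ)/4) = b := by
  subst h
  rw [← Real.rpow_natCast b 4, ← Real.rpow_mul hb]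
  norm_num

lemma rpow_quarter_pow4 {a : ℝ} (ha : 0 ≤ a) : (a ^ ((1:ℝ)/4)) ^ (4:ℕ) = a := by
  rw [← Real.rpow_natCast (a ^ ((1:ℝ)/4)) 4, ← Real.rpow_mul ha]
  norm_num

lemma amgm4c {V : Type} [DecidableEq V] (e : Finset V) (he : e.card = 4)
    (x c : V → ℝ) (hx : ∀ u ∈ e, 0 ≤ x u) (hc : ∀ u ∈ e, 0 ≤ c u)
    (hprod : ∏ u ∈ e, c u = 1) :
    ∏ u ∈ e, x u ≤ (1/4) * ∑ u ∈ e, c u * (x u)^4 := by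
  have key := amgm4 e he (fun u => (c u) ^ ((1:ℝ)/4) * x u)
    (fun u hu => mul_nonneg (Real.rpow_nonneg (hc u hu) _) (hx u hu))
  have hp : ∏ u ∈ e, ((c u) ^ ((1:ℝ)/4) * x u) = ∏ u ∈ e, x u := by
    rw [Finset.prod_mul_distrib, Real.finset_prod_rpow e c (fun u hu => hc u hu), hprod]
    simp
  have hs : ∀ u ∈ e, ((c u) ^ ((1:ℝ)/4) * x u)^4 = c u * (x u)^4 := by
    intro u hu
    rw [mul_pow, rpow_quarter_pow4 (hc u hu)]
  rw [hp] at key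
  calc ∏ u ∈ e, x u ≤ (1/4) * ∑ u ∈ e, ((c u) ^ ((1:ℝ)/4) * x u)^4 := key
    _ = (1/4) * ∑ u ∈ e, c u * (x u)^4 := by rw [Finset.sum_congr rfl hs]

set_option maxHeartbeats 1000000 in
/-- the 4-uniform hypergraph `H^{(4)}_{1,1,2,2}` — a central 4-edge
`F0 = {v 0, v 1, v 2, v 3}` with loose paths of lengths 1, 1, 2, 2 attached at its
four vertices (single edges `g1, g2` at `v 0, v 1`, and two-edge loose paths
`a1,b1` and `a2,b2` at `v 2, v 3`) — has spectral radius `3!·4^{1/4}`. -/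
theorem H1122_specRad {V : Type} [Fintype V] [DecidableEq V]
    (v : Fin 4 → V) (hv : Function.Injective v)
    (F0 g1 g2 a1 b1 a2 b2 : Finset V)
    (hF0 : F0 = {v 0, v 1, v 2, v 3})
    (hcg1 : g1.card = 4) (hcg2 : g2.card = 4)
    (hca1 : a1.card = 4) (hcb1 : b1.card = 4)
    (hca2 : a2.card = 4) (hcb2 : b2.card = 4)
    (hg1 : F0 ∩ g1 = {v 0}) (hg2 : F0 ∩ g2 = {v 1})
    (ha1 : F0 ∩ a1 = {v 2}) (ha2 : F0 ∩ a2 = {v 3})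
    (hab1 : (a1 ∩ b1).card = 1) (hab2 : (a2 ∩ b2).card = 1)
    (hFb1 : F0 ∩ b1 = ∅) (hFb2 : F0 ∩ b2 = ∅)
    (hg1g2 : g1 ∩ g2 = ∅) (hg1a1 : g1 ∩ a1 = ∅) (hg1a2 : g1 ∩ a2 = ∅)
    (hg1b1 : g1 ∩ b1 = ∅) (hg1b2 : g1 ∩ b2 = ∅)
    (hg2a1 : g2 ∩ a1 = ∅) (hg2a2 : g2 ∩ a2 = ∅)
    (hg2b1 : g2 ∩ b1 = ∅) (hg2b2 : g2 ∩ b2 = ∅)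
    (ha1a2 : a1 ∩ a2 = ∅) (ha1b2 : a1 ∩ b2 = ∅)
    (ha2b1 : a2 ∩ b1 = ∅) (hb1b2 : b1 ∩ b2 = ∅)
    (E : Finset (Finset V))
    (hE : E = {F0, g1, g2, a1, b1, a2, b2}) (hEcard : E.card = 7)
    (hcov : ∀ x : V, ∃ f ∈ E, x ∈ f) :
    specRad 4 E = (Nat.factorial 3 : ℝ) * (4 : ℝ) ^ ((1 : ℝ) / 4) := by
  -- basic distinctness
  have hvne : ∀ i j : Fin 4, i ≠ j → v i ≠ v j := fun i j hij h => hij (hv h)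
  have h01 : v 0 ≠ v 1 := hvne 0 1 (by decide)
  have h02 : v 0 ≠ v 2 := hvne 0 2 (by decide)
  have h03 : v 0 ≠ v 3 := hvne 0 3 (by decide)
  have h12 : v 1 ≠ v 2 := hvne 1 2 (by decide)
  have h13 : v 1 ≠ v 3 := hvne 1 3 (by decide)
  have h23 : v 2 ≠ v 3 := hvne 2 3 (by decide)
  -- memberships in F0
  have hv0F : v 0 ∈ F0 := by rw [hF0]; simp
  have hv1F : v 1 ∈ F0 := by rw [hF0]; simp
  have hv2F : v 2 ∈ F0 := by rw [hF0]; simp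
  have hv3F : v 3 ∈ F0 := by rw [hF0]; simp
  -- disjointness helpers
  have dj : ∀ (s t : Finset V), s ∩ t = ∅ → ∀ u, u ∈ s → u ∉ t := by
    intro s t h u hu ht
    have : u ∈ s ∩ t := Finset.mem_inter.mpr ⟨hu, ht⟩
    rw [h] at this
    exact absurd this (Finset.notMem_empty u)
  have si : ∀ (s t : Finset V) (w : V), s ∩ t = {w} → ∀ u, u ∈ s → u ∈ t → u = w := by
    intro s t w h u hu ht
    have : u ∈ s ∩ t := Finset.mem_inter.mpr ⟨hu, ht⟩
    rw [h] at this
    exact Finset.mem_singleton.mp this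
  -- attachment memberships
  have hv0g1 : v 0 ∈ g1 := (Finset.mem_inter.mp (hg1 ▸ Finset.mem_singleton_self (v 0))).2
  have hv1g2 : v 1 ∈ g2 := (Finset.mem_inter.mp (hg2 ▸ Finset.mem_singleton_self (v 1))).2
  have hv2a1 : v 2 ∈ a1 := (Finset.mem_inter.mp (ha1 ▸ Finset.mem_singleton_self (v 2))).2
  have hv3a2 : v 3 ∈ a2 := (Finset.mem_inter.mp (ha2 ▸ Finset.mem_singleton_self (v 3))).2
  -- joint vertices
  obtain ⟨w1, hw1⟩ := Finset.card_eq_one.mp hab1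
  obtain ⟨w2, hw2⟩ := Finset.card_eq_one.mp hab2
  have hw1a : w1 ∈ a1 := (Finset.mem_inter.mp (hw1 ▸ Finset.mem_singleton_self w1)).1
  have hw1b : w1 ∈ b1 := (Finset.mem_inter.mp (hw1 ▸ Finset.mem_singleton_self w1)).2
  have hw2a : w2 ∈ a2 := (Finset.mem_inter.mp (hw2 ▸ Finset.mem_singleton_self w2)).1
  have hw2b : w2 ∈ b2 := (Finset.mem_inter.mp (hw2 ▸ Finset.mem_singleton_self w2)).2
  have hw1nF : w1 ∉ F0 := fun h => dj F0 b1 hFb1 w1 h hw1b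
  have hw2nF : w2 ∉ F0 := fun h => dj F0 b2 hFb2 w2 h hw2b
    -- F0 card
  have hF0card : F0.card = 4 := by
    rw [hF0, Finset.card_insert_of_notMem (by simp [h01, h02, h03]),
      Finset.card_insert_of_notMem (by simp [h12, h13]),
      Finset.card_insert_of_notMem (by simp [h23]), Finset.card_singleton]
  -- edge decompositions
  set A1 : Finset V := g1.erase (v 0) with hA1def
  set A2 : Finset V := g2.erase (v 1) with hA2def
  have hw1mem : w1 ∈ a1.erase (v 2) := Finset.mem_erase.mpr ⟨fun h => hw1nF (h ▸ hv2F), hw1a⟩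
  have hw2mem : w2 ∈ a2.erase (v 3) := Finset.mem_erase.mpr ⟨fun h => hw2nF (h ▸ hv3F), hw2a⟩
  set P1 : Finset V := (a1.erase (v 2)).erase w1 with hP1def
  set P2 : Finset V := (a2.erase (v 3)).erase w2 with hP2def
  set Q1 : Finset V := b1.erase w1 with hQ1def
  set Q2 : Finset V := b2.erase w2 with hQ2def
  have hg1dec : g1 = insert (v 0) A1 := (Finset.insert_erase hv0g1).symm
  have hg2dec : g2 = insert (v 1) A2 := (Finset.insert_erase hv1g2).symm
  have ha1dec : a1 = insert (v 2) (insert w1 P1) := by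
    rw [hP1def, Finset.insert_erase hw1mem, Finset.insert_erase hv2a1]
  have ha2dec : a2 = insert (v 3) (insert w2 P2) := by
    rw [hP2def, Finset.insert_erase hw2mem, Finset.insert_erase hv3a2]
  have hb1dec : b1 = insert w1 Q1 := (Finset.insert_erase hw1b).symm
  have hb2dec : b2 = insert w2 Q2 := (Finset.insert_erase hw2b).symm
  have hv0nA1 : v 0 ∉ A1 := Finset.notMem_erase _ _
  have hv1nA2 : v 1 ∉ A2 := Finset.notMem_erase _ _
  have hw1nP1 : w1 ∉ P1 := Finset.notMem_erase _ _
  have hw2nP2 : w2 ∉ P2 := Finset.notMem_erase _ _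
  have hw1nQ1 : w1 ∉ Q1 := Finset.notMem_erase _ _
  have hw2nQ2 : w2 ∉ Q2 := Finset.notMem_erase _ _
  have hv2nIns1 : v 2 ∉ insert w1 P1 := by
    intro h
    rcases Finset.mem_insert.mp h with h | h
    · exact hw1nF (h ▸ hv2F)
    · exact (Finset.mem_erase.mp (Finset.mem_erase.mp h).2).1 rfl
  have hv3nIns2 : v 3 ∉ insert w2 P2 := by
    intro h
    rcases Finset.mem_insert.mp h with h | h
    · exact hw2nF (h ▸ hv3F)
    · exact (Finset.mem_erase.mp (Finset.mem_erase.mp h).2).1 rfl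
  -- cards of pieces
  have hA1card : A1.card = 3 := by rw [hA1def, Finset.card_erase_of_mem hv0g1, hcg1]
  have hA2card : A2.card = 3 := by rw [hA2def, Finset.card_erase_of_mem hv1g2, hcg2]
  have hP1card : P1.card = 2 := by
    rw [hP1def, Finset.card_erase_of_mem hw1mem, Finset.card_erase_of_mem hv2a1, hca1]
  have hP2card : P2.card = 2 := by
    rw [hP2def, Finset.card_erase_of_mem hw2mem, Finset.card_erase_of_mem hv3a2, hca2]
  have hQ1card : Q1.card = 3 := by rw [hQ1def, Finset.card_erase_of_mem hw1b, hcb1]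
  have hQ2card : Q2.card = 3 := by rw [hQ2def, Finset.card_erase_of_mem hw2b, hcb2]
  -- membership descriptions of pieces
  have hA1mem : ∀ u ∈ A1, u ∈ g1 ∧ u ∉ F0 ∧ u ∉ g2 ∧ u ∉ a1 ∧ u ∉ b1 ∧ u ∉ a2 ∧ u ∉ b2 := by
    intro u hu
    obtain ⟨hne, hug⟩ := Finset.mem_erase.mp hu
    exact ⟨hug, fun h => hne (si F0 g1 (v 0) hg1 u h hug), dj g1 g2 hg1g2 u hug,
      dj g1 a1 hg1a1 u hug, dj g1 b1 hg1b1 u hug, dj g1 a2 hg1a2 u hug, dj g1 b2 hg1b2 u hug⟩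
  have hA2mem : ∀ u ∈ A2, u ∈ g2 ∧ u ∉ F0 ∧ u ∉ g1 ∧ u ∉ a1 ∧ u ∉ b1 ∧ u ∉ a2 ∧ u ∉ b2 := by
    intro u hu
    obtain ⟨hne, hug⟩ := Finset.mem_erase.mp hu
    exact ⟨hug, fun h => hne (si F0 g2 (v 1) hg2 u h hug), fun h => dj g1 g2 hg1g2 u h hug,
      dj g2 a1 hg2a1 u hug, dj g2 b1 hg2b1 u hug, dj g2 a2 hg2a2 u hug, dj g2 b2 hg2b2 u hug⟩
  have hP1mem : ∀ u ∈ P1, u ∈ a1 ∧ u ∉ F0 ∧ u ∉ g1 ∧ u ∉ g2 ∧ u ∉ b1 ∧ u ∉ a2 ∧ u ∉ b2 := by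
    intro u hu
    obtain ⟨hnw, hu2⟩ := Finset.mem_erase.mp hu
    obtain ⟨hnv, hua⟩ := Finset.mem_erase.mp hu2
    exact ⟨hua, fun h => hnv (si F0 a1 (v 2) ha1 u h hua), fun h => dj g1 a1 hg1a1 u h hua,
      fun h => dj g2 a1 hg2a1 u h hua, fun h => hnw (si a1 b1 w1 hw1 u hua h),
      dj a1 a2 ha1a2 u hua, dj a1 b2 ha1b2 u hua⟩
  have hP2mem : ∀ u ∈ P2, u ∈ a2 ∧ u ∉ F0 ∧ u ∉ g1 ∧ u ∉ g2 ∧ u ∉ b2 ∧ u ∉ a1 ∧ u ∉ b1 := by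
    intro u hu
    obtain ⟨hnw, hu2⟩ := Finset.mem_erase.mp hu
    obtain ⟨hnv, hua⟩ := Finset.mem_erase.mp hu2
    exact ⟨hua, fun h => hnv (si F0 a2 (v 3) ha2 u h hua), fun h => dj g1 a2 hg1a2 u h hua,
      fun h => dj g2 a2 hg2a2 u h hua, fun h => hnw (si a2 b2 w2 hw2 u hua h),
      fun h => dj a1 a2 ha1a2 u h hua, fun h => dj a2 b1 ha2b1 u hua h⟩
  have hQ1mem : ∀ u ∈ Q1, u ∈ b1 ∧ u ∉ F0 ∧ u ∉ g1 ∧ u ∉ g2 ∧ u ∉ a1 ∧ u ∉ a2 ∧ u ∉ b2 := by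
    intro u hu
    obtain ⟨hnw, hub⟩ := Finset.mem_erase.mp hu
    exact ⟨hub, fun h => dj F0 b1 hFb1 u h hub, fun h => dj g1 b1 hg1b1 u h hub,
      fun h => dj g2 b1 hg2b1 u h hub, fun h => hnw (si a1 b1 w1 hw1 u h hub),
      fun h => dj a2 b1 ha2b1 u h hub, dj b1 b2 hb1b2 u hub⟩
  have hQ2mem : ∀ u ∈ Q2, u ∈ b2 ∧ u ∉ F0 ∧ u ∉ g1 ∧ u ∉ g2 ∧ u ∉ a2 ∧ u ∉ a1 ∧ u ∉ b1 := by
    intro u hu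
    obtain ⟨hnw, hub⟩ := Finset.mem_erase.mp hu
    exact ⟨hub, fun h => dj F0 b2 hFb2 u h hub, fun h => dj g1 b2 hg1b2 u h hub,
      fun h => dj g2 b2 hg2b2 u h hub, fun h => hnw (si a2 b2 w2 hw2 u h hub),
      fun h => dj a1 b2 ha1b2 u h hub, fun h => dj b1 b2 hb1b2 u h hub⟩
  -- vertex v i nonmemberships
  have hv0ng2 : v 0 ∉ g2 := fun h => h01 (si F0 g2 (v 1) hg2 (v 0) hv0F h)
  have hv0na1 : v 0 ∉ a1 := fun h => h02 (si F0 a1 (v 2) ha1 (v 0) hv0F h)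
  have hv0na2 : v 0 ∉ a2 := fun h => h03 (si F0 a2 (v 3) ha2 (v 0) hv0F h)
  have hv0nb1 : v 0 ∉ b1 := dj F0 b1 hFb1 _ hv0F
  have hv0nb2 : v 0 ∉ b2 := dj F0 b2 hFb2 _ hv0F
  have hv1ng1 : v 1 ∉ g1 := fun h => h01 ((si F0 g1 (v 0) hg1 (v 1) hv1F h).symm ▸ rfl)
  have hv1na1 : v 1 ∉ a1 := fun h => h12 (si F0 a1 (v 2) ha1 (v 1) hv1F h)
  have hv1na2 : v 1 ∉ a2 := fun h => h13 (si F0 a2 (v 3) ha2 (v 1) hv1F h)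
  have hv1nb1 : v 1 ∉ b1 := dj F0 b1 hFb1 _ hv1F
  have hv1nb2 : v 1 ∉ b2 := dj F0 b2 hFb2 _ hv1F
  have hv2ng1 : v 2 ∉ g1 := fun h => h02 ((si F0 g1 (v 0) hg1 (v 2) hv2F h) ▸ rfl)
  have hv2ng2 : v 2 ∉ g2 := fun h => h12 ((si F0 g2 (v 1) hg2 (v 2) hv2F h) ▸ rfl)
  have hv2na2 : v 2 ∉ a2 := fun h => h23 (si F0 a2 (v 3) ha2 (v 2) hv2F h)
  have hv2nb1 : v 2 ∉ b1 := dj F0 b1 hFb1 _ hv2F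
  have hv2nb2 : v 2 ∉ b2 := dj F0 b2 hFb2 _ hv2F
  have hv3ng1 : v 3 ∉ g1 := fun h => h03 ((si F0 g1 (v 0) hg1 (v 3) hv3F h) ▸ rfl)
  have hv3ng2 : v 3 ∉ g2 := fun h => h13 ((si F0 g2 (v 1) hg2 (v 3) hv3F h) ▸ rfl)
  have hv3na1 : v 3 ∉ a1 := fun h => h23 ((si F0 a1 (v 2) ha1 (v 3) hv3F h) ▸ rfl)
  have hv3nb1 : v 3 ∉ b1 := dj F0 b1 hFb1 _ hv3F
  have hv3nb2 : v 3 ∉ b2 := dj F0 b2 hFb2 _ hv3F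
    -- the extremal weights
  set val : V → ℝ := fun u =>
    if u = v 0 ∨ u = v 1 then 4
    else if u = v 2 ∨ u = v 3 then 9/2
    else if u ∈ a1 ∩ b1 ∨ u ∈ a2 ∩ b2 then 2
    else if u ∈ a1 ∨ u ∈ a2 then 3/2
    else if u ∈ b1 ∨ u ∈ b2 then 1/2
    else 1 with hvaldef
  have hvalpos : ∀ u, 0 < val u := by
    intro u
    rw [hvaldef]
    dsimp only
    split_ifs <;> norm_num
  have hval0 : val (v 0) = 4 := by rw [hvaldef]; simp
  have hval1 : val (v 1) = 4 := by rw [hvaldef]; simp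
  have hval2 : val (v 2) = 9/2 := by
    rw [hvaldef]; dsimp only
    rw [if_neg (by rintro (h | h); exacts [h02 h.symm, h12 h.symm]), if_pos (Or.inl rfl)]
  have hval3 : val (v 3) = 9/2 := by
    rw [hvaldef]; dsimp only
    rw [if_neg (by rintro (h | h); exacts [h03 h.symm, h13 h.symm]), if_pos (Or.inr rfl)]
  have hvalnF : ∀ u, u ∉ F0 → ¬(u = v 0 ∨ u = v 1) ∧ ¬(u = v 2 ∨ u = v 3) := by
    intro u h
    constructor <;> rintro (rfl | rfl)
    exacts [h hv0F, h hv1F, h hv2F, h hv3F]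
  have hvalA1 : ∀ u ∈ A1, val u = 1 := by
    intro u hu
    obtain ⟨_, hnF, _, hna1, hnb1, hna2, hnb2⟩ := hA1mem u hu
    obtain ⟨hc1, hc2⟩ := hvalnF u hnF
    rw [hvaldef]; dsimp only
    rw [if_neg hc1, if_neg hc2,
      if_neg (by rintro (h | h); exacts [hna1 (Finset.mem_inter.mp h).1, hna2 (Finset.mem_inter.mp h).1]),
      if_neg (by rintro (h | h); exacts [hna1 h, hna2 h]),
      if_neg (by rintro (h | h); exacts [hnb1 h, hnb2 h])]
  have hvalA2 : ∀ u ∈ A2, val u = 1 := by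
    intro u hu
    obtain ⟨_, hnF, _, hna1, hnb1, hna2, hnb2⟩ := hA2mem u hu
    obtain ⟨hc1, hc2⟩ := hvalnF u hnF
    rw [hvaldef]; dsimp only
    rw [if_neg hc1, if_neg hc2,
      if_neg (by rintro (h | h); exacts [hna1 (Finset.mem_inter.mp h).1, hna2 (Finset.mem_inter.mp h).1]),
      if_neg (by rintro (h | h); exacts [hna1 h, hna2 h]),
      if_neg (by rintro (h | h); exacts [hnb1 h, hnb2 h])]
  have hvalw1 : val w1 = 2 := by
    obtain ⟨hc1, hc2⟩ := hvalnF w1 hw1nF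
    rw [hvaldef]; dsimp only
    rw [if_neg hc1, if_neg hc2, if_pos (Or.inl (Finset.mem_inter.mpr ⟨hw1a, hw1b⟩))]
  have hvalw2 : val w2 = 2 := by
    obtain ⟨hc1, hc2⟩ := hvalnF w2 hw2nF
    rw [hvaldef]; dsimp only
    rw [if_neg hc1, if_neg hc2, if_pos (Or.inr (Finset.mem_inter.mpr ⟨hw2a, hw2b⟩))]
  have hvalP1 : ∀ u ∈ P1, val u = 3/2 := by
    intro u hu
    obtain ⟨hua, hnF, _, _, hnb1, hna2, hnb2⟩ := hP1mem u hu
    obtain ⟨hc1, hc2⟩ := hvalnF u hnF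
    rw [hvaldef]; dsimp only
    rw [if_neg hc1, if_neg hc2,
      if_neg (by rintro (h | h); exacts [hnb1 (Finset.mem_inter.mp h).2, hna2 (Finset.mem_inter.mp h).1]),
      if_pos (Or.inl hua)]
  have hvalP2 : ∀ u ∈ P2, val u = 3/2 := by
    intro u hu
    obtain ⟨hua, hnF, _, _, hnb2, hna1, hnb1⟩ := hP2mem u hu
    obtain ⟨hc1, hc2⟩ := hvalnF u hnF
    rw [hvaldef]; dsimp only
    rw [if_neg hc1, if_neg hc2,
      if_neg (by rintro (h | h); exacts [hna1 (Finset.mem_inter.mp h).1, hnb2 (Finset.mem_inter.mp h).2]),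
      if_pos (Or.inr hua)]
  have hvalQ1 : ∀ u ∈ Q1, val u = 1/2 := by
    intro u hu
    obtain ⟨hub, hnF, _, _, hna1, hna2, hnb2⟩ := hQ1mem u hu
    obtain ⟨hc1, hc2⟩ := hvalnF u hnF
    rw [hvaldef]; dsimp only
    rw [if_neg hc1, if_neg hc2,
      if_neg (by rintro (h | h); exacts [hna1 (Finset.mem_inter.mp h).1, hna2 (Finset.mem_inter.mp h).1]),
      if_neg (by rintro (h | h); exacts [hna1 h, hna2 h]),
      if_pos (Or.inl hub)]
  have hvalQ2 : ∀ u ∈ Q2, val u = 1/2 := by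
    intro u hu
    obtain ⟨hub, hnF, _, _, hna2, hna1, hnb1⟩ := hQ2mem u hu
    obtain ⟨hc1, hc2⟩ := hvalnF u hnF
    rw [hvaldef]; dsimp only
    rw [if_neg hc1, if_neg hc2,
      if_neg (by rintro (h | h); exacts [hna1 (Finset.mem_inter.mp h).1, hna2 (Finset.mem_inter.mp h).1]),
      if_neg (by rintro (h | h); exacts [hna1 h, hna2 h]),
      if_pos (Or.inr hub)]
    -- R1 / R2 membership facts
  have hR1mem : ∀ u ∈ a1.erase (v 2), u ∈ a1 ∧ u ∉ F0 ∧ u ∉ g1 ∧ u ∉ g2 := by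
    intro u hu
    obtain ⟨hne, hua⟩ := Finset.mem_erase.mp hu
    exact ⟨hua, fun h => hne (si F0 a1 (v 2) ha1 u h hua), fun h => dj g1 a1 hg1a1 u h hua,
      fun h => dj g2 a1 hg2a1 u h hua⟩
  have hR2mem : ∀ u ∈ a2.erase (v 3), u ∈ a2 ∧ u ∉ F0 ∧ u ∉ g1 ∧ u ∉ g2 := by
    intro u hu
    obtain ⟨hne, hua⟩ := Finset.mem_erase.mp hu
    exact ⟨hua, fun h => hne (si F0 a2 (v 3) ha2 u h hua), fun h => dj g1 a2 hg1a2 u h hua,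
      fun h => dj g2 a2 hg2a2 u h hua⟩
  -- disjointness of the pieces
  have dF0A1 : Disjoint F0 A1 := Finset.disjoint_left.mpr (fun _ h h' => (hA1mem _ h').2.1 h)
  have dF0A2 : Disjoint F0 A2 := Finset.disjoint_left.mpr (fun _ h h' => (hA2mem _ h').2.1 h)
  have dA1A2 : Disjoint A1 A2 := Finset.disjoint_left.mpr
    (fun _ h h' => (hA2mem _ h').2.2.1 (hA1mem _ h).1)
  have dF0R1 : Disjoint F0 (a1.erase (v 2)) := Finset.disjoint_left.mpr
    (fun _ h h' => (hR1mem _ h').2.1 h)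
  have dA1R1 : Disjoint A1 (a1.erase (v 2)) := Finset.disjoint_left.mpr
    (fun _ h h' => (hA1mem _ h).2.2.2.1 (hR1mem _ h').1)
  have dA2R1 : Disjoint A2 (a1.erase (v 2)) := Finset.disjoint_left.mpr
    (fun _ h h' => (hA2mem _ h).2.2.2.1 (hR1mem _ h').1)
  have dF0Q1 : Disjoint F0 Q1 := Finset.disjoint_left.mpr (fun _ h h' => (hQ1mem _ h').2.1 h)
  have dA1Q1 : Disjoint A1 Q1 := Finset.disjoint_left.mpr
    (fun _ h h' => (hA1mem _ h).2.2.2.2.1 (hQ1mem _ h').1)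
  have dA2Q1 : Disjoint A2 Q1 := Finset.disjoint_left.mpr
    (fun _ h h' => (hA2mem _ h).2.2.2.2.1 (hQ1mem _ h').1)
  have dR1Q1 : Disjoint (a1.erase (v 2)) Q1 := Finset.disjoint_left.mpr
    (fun _ h h' => (hQ1mem _ h').2.2.2.2.1 (hR1mem _ h).1)
  have dF0R2 : Disjoint F0 (a2.erase (v 3)) := Finset.disjoint_left.mpr
    (fun _ h h' => (hR2mem _ h').2.1 h)
  have dA1R2 : Disjoint A1 (a2.erase (v 3)) := Finset.disjoint_left.mpr
    (fun _ h h' => (hA1mem _ h).2.2.2.2.2.1 (hR2mem _ h').1)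
  have dA2R2 : Disjoint A2 (a2.erase (v 3)) := Finset.disjoint_left.mpr
    (fun _ h h' => (hA2mem _ h).2.2.2.2.2.1 (hR2mem _ h').1)
  have dR1R2 : Disjoint (a1.erase (v 2)) (a2.erase (v 3)) := Finset.disjoint_left.mpr
    (fun _ h h' => dj a1 a2 ha1a2 _ (hR1mem _ h).1 (hR2mem _ h').1)
  have dQ1R2 : Disjoint Q1 (a2.erase (v 3)) := Finset.disjoint_left.mpr
    (fun _ h h' => (hQ1mem _ h).2.2.2.2.2.1 (hR2mem _ h').1)
  have dF0Q2 : Disjoint F0 Q2 := Finset.disjoint_left.mpr (fun _ h h' => (hQ2mem _ h').2.1 h)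
  have dA1Q2 : Disjoint A1 Q2 := Finset.disjoint_left.mpr
    (fun _ h h' => (hA1mem _ h).2.2.2.2.2.2 (hQ2mem _ h').1)
  have dA2Q2 : Disjoint A2 Q2 := Finset.disjoint_left.mpr
    (fun _ h h' => (hA2mem _ h).2.2.2.2.2.2 (hQ2mem _ h').1)
  have dR1Q2 : Disjoint (a1.erase (v 2)) Q2 := Finset.disjoint_left.mpr
    (fun _ h h' => dj a1 b2 ha1b2 _ (hR1mem _ h).1 (hQ2mem _ h').1)
  have dQ1Q2 : Disjoint Q1 Q2 := Finset.disjoint_left.mpr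
    (fun _ h h' => (hQ1mem _ h).2.2.2.2.2.2 (hQ2mem _ h').1)
  have dR2Q2 : Disjoint (a2.erase (v 3)) Q2 := Finset.disjoint_left.mpr
    (fun _ h h' => (hQ2mem _ h').2.2.2.2.1 (hR2mem _ h).1)
  -- universe decomposition
  have hunion : (Finset.univ : Finset V) =
      F0 ∪ A1 ∪ A2 ∪ a1.erase (v 2) ∪ Q1 ∪ a2.erase (v 3) ∪ Q2 := by
    symm
    apply Finset.eq_univ_iff_forall.mpr
    intro u
    obtain ⟨f, hf, huf⟩ := hcov u
    rw [hE] at hf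
    simp only [Finset.mem_insert, Finset.mem_singleton] at hf
    simp only [Finset.mem_union]
    rcases hf with rfl | rfl | rfl | rfl | rfl | rfl | rfl
    · exact Or.inl (Or.inl (Or.inl (Or.inl (Or.inl (Or.inl huf)))))
    · by_cases h : u = v 0
      · exact Or.inl (Or.inl (Or.inl (Or.inl (Or.inl (Or.inl (h ▸ hv0F))))))
      · exact Or.inl (Or.inl (Or.inl (Or.inl (Or.inl (Or.inr (Finset.mem_erase.mpr ⟨h, huf⟩))))))
    · by_cases h : u = v 1
      · exact Or.inl (Or.inl (Or.inl (Or.inl (Or.inl (Or.inl (h ▸ hv1F))))))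
      · exact Or.inl (Or.inl (Or.inl (Or.inl (Or.inr (Finset.mem_erase.mpr ⟨h, huf⟩)))))
    · by_cases h : u = v 2
      · exact Or.inl (Or.inl (Or.inl (Or.inl (Or.inl (Or.inl (h ▸ hv2F))))))
      · exact Or.inl (Or.inl (Or.inl (Or.inr (Finset.mem_erase.mpr ⟨h, huf⟩))))
    · by_cases h : u = w1
      · exact Or.inl (Or.inl (Or.inl (Or.inr (h ▸ hw1mem))))
      · exact Or.inl (Or.inl (Or.inr (Finset.mem_erase.mpr ⟨h, huf⟩)))
    · by_cases h : u = v 3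
      · exact Or.inl (Or.inl (Or.inl (Or.inl (Or.inl (Or.inl (h ▸ hv3F))))))
      · exact Or.inl (Or.inr (Finset.mem_erase.mpr ⟨h, huf⟩))
    · by_cases h : u = w2
      · exact Or.inl (Or.inr (h ▸ hw2mem))
      · exact Or.inr (Finset.mem_erase.mpr ⟨h, huf⟩)
  have hsum7 : ∀ f : V → ℝ, ∑ u, f u =
      (∑ u ∈ F0, f u) + (∑ u ∈ A1, f u) + (∑ u ∈ A2, f u) + (∑ u ∈ a1.erase (v 2), f u)
      + (∑ u ∈ Q1, f u) + (∑ u ∈ a2.erase (v 3), f u) + (∑ u ∈ Q2, f u) := by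
    intro f
    rw [hunion,
      Finset.sum_union (by simp only [Finset.disjoint_union_left]; exact ⟨⟨⟨⟨⟨dF0Q2, dA1Q2⟩, dA2Q2⟩, dR1Q2⟩, dQ1Q2⟩, dR2Q2⟩),
      Finset.sum_union (by simp only [Finset.disjoint_union_left]; exact ⟨⟨⟨⟨dF0R2, dA1R2⟩, dA2R2⟩, dR1R2⟩, dQ1R2⟩),
      Finset.sum_union (by simp only [Finset.disjoint_union_left]; exact ⟨⟨⟨dF0Q1, dA1Q1⟩, dA2Q1⟩, dR1Q1⟩),
      Finset.sum_union (by simp only [Finset.disjoint_union_left]; exact ⟨⟨dF0R1, dA1R1⟩, dA2R1⟩),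
      Finset.sum_union (by simp only [Finset.disjoint_union_left]; exact ⟨dF0A2, dA1A2⟩),
      Finset.sum_union dF0A1]
    -- sqrt 2
  set s2 : ℝ := Real.sqrt 2 with hs2def
  have hs2sq : s2 ^ 2 = 2 := Real.sq_sqrt (by norm_num)
  have hs2nn : 0 ≤ s2 := Real.sqrt_nonneg 2
  -- edge distinctness
  have ednea : ∀ s t : Finset V, s.card = 4 → (s ∩ t).card ≤ 1 → s ≠ t := by
    rintro s t h4 hle rfl
    rw [Finset.inter_self] at hle
    omega
  have neF0g1 : F0 ≠ g1 := ednea _ _ hF0card (by rw [hg1]; simp)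
  have neF0g2 : F0 ≠ g2 := ednea _ _ hF0card (by rw [hg2]; simp)
  have neF0a1 : F0 ≠ a1 := ednea _ _ hF0card (by rw [ha1]; simp)
  have neF0b1 : F0 ≠ b1 := ednea _ _ hF0card (by rw [hFb1]; simp)
  have neF0a2 : F0 ≠ a2 := ednea _ _ hF0card (by rw [ha2]; simp)
  have neF0b2 : F0 ≠ b2 := ednea _ _ hF0card (by rw [hFb2]; simp)
  have neg1g2 : g1 ≠ g2 := ednea _ _ hcg1 (by rw [hg1g2]; simp)
  have neg1a1 : g1 ≠ a1 := ednea _ _ hcg1 (by rw [hg1a1]; simp)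
  have neg1b1 : g1 ≠ b1 := ednea _ _ hcg1 (by rw [hg1b1]; simp)
  have neg1a2 : g1 ≠ a2 := ednea _ _ hcg1 (by rw [hg1a2]; simp)
  have neg1b2 : g1 ≠ b2 := ednea _ _ hcg1 (by rw [hg1b2]; simp)
  have neg2a1 : g2 ≠ a1 := ednea _ _ hcg2 (by rw [hg2a1]; simp)
  have neg2b1 : g2 ≠ b1 := ednea _ _ hcg2 (by rw [hg2b1]; simp)
  have neg2a2 : g2 ≠ a2 := ednea _ _ hcg2 (by rw [hg2a2]; simp)
  have neg2b2 : g2 ≠ b2 := ednea _ _ hcg2 (by rw [hg2b2]; simp)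
  have nea1b1 : a1 ≠ b1 := ednea _ _ hca1 (le_of_eq hab1)
  have nea1a2 : a1 ≠ a2 := ednea _ _ hca1 (by rw [ha1a2]; simp)
  have nea1b2 : a1 ≠ b2 := ednea _ _ hca1 (by rw [ha1b2]; simp)
  have neb1a2 : b1 ≠ a2 := ednea _ _ hcb1 (by rw [Finset.inter_comm, ha2b1]; simp)
  have neb1b2 : b1 ≠ b2 := ednea _ _ hcb1 (by rw [hb1b2]; simp)
  have nea2b2 : a2 ≠ b2 := ednea _ _ hca2 (le_of_eq hab2)
  have hEsum : ∀ f : Finset V → ℝ,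
      ∑ e ∈ E, f e = f F0 + f g1 + f g2 + f a1 + f b1 + f a2 + f b2 := by
    intro f
    rw [hE,
      Finset.sum_insert (by simp [neF0g1, neF0g2, neF0a1, neF0b1, neF0a2, neF0b2]),
      Finset.sum_insert (by simp [neg1g2, neg1a1, neg1b1, neg1a2, neg1b2]),
      Finset.sum_insert (by simp [neg2a1, neg2b1, neg2a2, neg2b2]),
      Finset.sum_insert (by simp [nea1b1, nea1a2, nea1b2]),
      Finset.sum_insert (by simp [neb1a2, neb1b2]),
      Finset.sum_insert (by simp [nea2b2]),
      Finset.sum_singleton]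
    ring
  -- piece decomposition of a1.erase (v 2)
  have hR1dec : a1.erase (v 2) = insert w1 P1 := (Finset.insert_erase hw1mem).symm
  have hR2dec : a2.erase (v 3) = insert w2 P2 := (Finset.insert_erase hw2mem).symm
  -- the witness vector
  set x0 : V → ℝ := fun u => val u ^ ((1:ℝ)/4) with hx0def
  have hx0nn : ∀ u, 0 ≤ x0 u := fun u => Real.rpow_nonneg (hvalpos u).le _
  have hx0pow : ∀ u, x0 u ^ 4 = val u := fun u => rpow_quarter_pow4 (hvalpos u).le
  have hx0prod : ∀ e : Finset V, ∏ u ∈ e, x0 u = (∏ u ∈ e, val u) ^ ((1:ℝ)/4) :=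
    fun e => Real.finset_prod_rpow e val (fun u _ => (hvalpos u).le) _
  have hx0ne : x0 ≠ 0 := by
    intro h
    have h0 : x0 (v 0) = 0 := by rw [h]; rfl
    have h4 := hx0pow (v 0)
    rw [h0, hval0] at h4
    norm_num at h4
  -- denominator value
  have sF0 : ∑ u ∈ F0, val u = 17 := by
    rw [hF0, Finset.sum_insert (by simp [h01, h02, h03]),
      Finset.sum_insert (by simp [h12, h13]), Finset.sum_insert (by simp [h23]),
      Finset.sum_singleton, hval0, hval1, hval2, hval3]
    norm_num
  have sA1 : ∑ u ∈ A1, val u = 3 := by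
    rw [Finset.sum_eq_card_nsmul hvalA1, hA1card]; norm_num
  have sA2 : ∑ u ∈ A2, val u = 3 := by
    rw [Finset.sum_eq_card_nsmul hvalA2, hA2card]; norm_num
  have sR1 : ∑ u ∈ a1.erase (v 2), val u = 5 := by
    rw [hR1dec, Finset.sum_insert hw1nP1, hvalw1, Finset.sum_eq_card_nsmul hvalP1, hP1card]
    norm_num
  have sR2 : ∑ u ∈ a2.erase (v 3), val u = 5 := by
    rw [hR2dec, Finset.sum_insert hw2nP2, hvalw2, Finset.sum_eq_card_nsmul hvalP2, hP2card]
    norm_num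
  have sQ1 : ∑ u ∈ Q1, val u = 3/2 := by
    rw [Finset.sum_eq_card_nsmul hvalQ1, hQ1card]; norm_num
  have sQ2 : ∑ u ∈ Q2, val u = 3/2 := by
    rw [Finset.sum_eq_card_nsmul hvalQ2, hQ2card]; norm_num
  have hD : ∑ u, x0 u ^ 4 = 36 := by
    rw [Finset.sum_congr rfl (fun u _ => hx0pow u), hsum7 val, sF0, sA1, sA2, sR1, sQ1, sR2, sQ2]
    norm_num
  -- numerator value
  have pF0 : ∏ u ∈ F0, val u = 324 := by
    rw [hF0, Finset.prod_insert (by simp [h01, h02, h03]),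
      Finset.prod_insert (by simp [h12, h13]), Finset.prod_insert (by simp [h23]),
      Finset.prod_singleton, hval0, hval1, hval2, hval3]
    norm_num
  have pg1 : ∏ u ∈ g1, val u = 4 := by
    rw [hg1dec, Finset.prod_insert hv0nA1, hval0, Finset.prod_eq_pow_card hvalA1, hA1card]
    norm_num
  have pg2 : ∏ u ∈ g2, val u = 4 := by
    rw [hg2dec, Finset.prod_insert hv1nA2, hval1, Finset.prod_eq_pow_card hvalA2, hA2card]
    norm_num
  have pa1 : ∏ u ∈ a1, val u = 81/4 := by
    rw [ha1dec, Finset.prod_insert hv2nIns1, Finset.prod_insert hw1nP1, hval2, hvalw1,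
      Finset.prod_eq_pow_card hvalP1, hP1card]
    norm_num
  have pa2 : ∏ u ∈ a2, val u = 81/4 := by
    rw [ha2dec, Finset.prod_insert hv3nIns2, Finset.prod_insert hw2nP2, hval3, hvalw2,
      Finset.prod_eq_pow_card hvalP2, hP2card]
    norm_num
  have pb1 : ∏ u ∈ b1, val u = 1/4 := by
    rw [hb1dec, Finset.prod_insert hw1nQ1, hvalw1, Finset.prod_eq_pow_card hvalQ1, hQ1card]
    norm_num
  have pb2 : ∏ u ∈ b2, val u = 1/4 := by
    rw [hb2dec, Finset.prod_insert hw2nQ2, hvalw2, Finset.prod_eq_pow_card hvalQ2, hQ2card]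
    norm_num
  have xF0 : ∏ u ∈ F0, x0 u = 3 * s2 := by
    rw [hx0prod, pF0]
    exact rpow_quarter_eq (by positivity) (by linear_combination (81*(s2^2) + 162) * hs2sq)
  have xg1 : ∏ u ∈ g1, x0 u = s2 := by
    rw [hx0prod, pg1]
    exact rpow_quarter_eq hs2nn (by linear_combination (s2^2 + 2) * hs2sq)
  have xg2 : ∏ u ∈ g2, x0 u = s2 := by
    rw [hx0prod, pg2]
    exact rpow_quarter_eq hs2nn (by linear_combination (s2^2 + 2) * hs2sq)
  have xa1 : ∏ u ∈ a1, x0 u = 3 * s2 / 2 := by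
    rw [hx0prod, pa1]
    exact rpow_quarter_eq (by positivity) (by linear_combination (81/16*(s2^2) + 81/8) * hs2sq)
  have xa2 : ∏ u ∈ a2, x0 u = 3 * s2 / 2 := by
    rw [hx0prod, pa2]
    exact rpow_quarter_eq (by positivity) (by linear_combination (81/16*(s2^2) + 81/8) * hs2sq)
  have xb1 : ∏ u ∈ b1, x0 u = s2 / 2 := by
    rw [hx0prod, pb1]
    exact rpow_quarter_eq (by positivity) (by linear_combination (1/16*(s2^2) + 1/8) * hs2sq)
  have xb2 : ∏ u ∈ b2, x0 u = s2 / 2 := by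
    rw [hx0prod, pb2]
    exact rpow_quarter_eq (by positivity) (by linear_combination (1/16*(s2^2) + 1/8) * hs2sq)
  have hN : ∑ e ∈ E, ∏ u ∈ e, x0 u = 9 * s2 := by
    rw [hEsum (fun e => ∏ u ∈ e, x0 u), xF0, xg1, xg2, xa1, xb1, xa2, xb2]
    ring
  have hfact4 : ((Nat.factorial 4 : ℕ) : ℝ) = 24 := by norm_num [Nat.factorial]
  -- upper-bound edge weights
  set cF : V → ℝ := fun u => if u = v 2 ∨ u = v 3 then 2*s2/3 else 3*s2/4 with hcFdef
  set cg1f : V → ℝ := fun u => if u = v 0 then s2/4 else s2 with hcg1def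
  set cg2f : V → ℝ := fun u => if u = v 1 then s2/4 else s2 with hcg2def
  set ca1f : V → ℝ := fun u => if u = v 2 then s2/3 else if u ∈ b1 then 3*s2/4 else s2 with hca1def
  set ca2f : V → ℝ := fun u => if u = v 3 then s2/3 else if u ∈ b2 then 3*s2/4 else s2 with hca2def
  set cb1f : V → ℝ := fun u => if u ∈ a1 then s2/4 else s2 with hcb1def
  set cb2f : V → ℝ := fun u => if u ∈ a2 then s2/4 else s2 with hcb2def
  have cF0v : cF (v 0) = 3*s2/4 := by
    rw [hcFdef]; dsimp only; rw [if_neg (by rintro (h | h); exacts [h02 h, h03 h])]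
  have cF1v : cF (v 1) = 3*s2/4 := by
    rw [hcFdef]; dsimp only; rw [if_neg (by rintro (h | h); exacts [h12 h, h13 h])]
  have cF2v : cF (v 2) = 2*s2/3 := by rw [hcFdef]; dsimp only; rw [if_pos (Or.inl rfl)]
  have cF3v : cF (v 3) = 2*s2/3 := by rw [hcFdef]; dsimp only; rw [if_pos (Or.inr rfl)]
  have cg1v0 : cg1f (v 0) = s2/4 := by rw [hcg1def]; dsimp only; rw [if_pos rfl]
  have cg2v1 : cg2f (v 1) = s2/4 := by rw [hcg2def]; dsimp only; rw [if_pos rfl]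
  have ca1v2 : ca1f (v 2) = s2/3 := by rw [hca1def]; dsimp only; rw [if_pos rfl]
  have ca2v3 : ca2f (v 3) = s2/3 := by rw [hca2def]; dsimp only; rw [if_pos rfl]
  have ca1w1 : ca1f w1 = 3*s2/4 := by
    rw [hca1def]; dsimp only
    rw [if_neg (by rintro rfl; exact hw1nF hv2F), if_pos hw1b]
  have ca2w2 : ca2f w2 = 3*s2/4 := by
    rw [hca2def]; dsimp only
    rw [if_neg (by rintro rfl; exact hw2nF hv3F), if_pos hw2b]
  have cb1w1 : cb1f w1 = s2/4 := by rw [hcb1def]; dsimp only; rw [if_pos hw1a]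
  have cb2w2 : cb2f w2 = s2/4 := by rw [hcb2def]; dsimp only; rw [if_pos hw2a]
  have cg1A1 : ∀ u ∈ A1, cg1f u = s2 := by
    intro u hu
    rw [hcg1def]; dsimp only; rw [if_neg (Finset.mem_erase.mp hu).1]
  have cg2A2 : ∀ u ∈ A2, cg2f u = s2 := by
    intro u hu
    rw [hcg2def]; dsimp only; rw [if_neg (Finset.mem_erase.mp hu).1]
  have ca1P1 : ∀ u ∈ P1, ca1f u = s2 := by
    intro u hu
    rw [hca1def]; dsimp only
    rw [if_neg (Finset.mem_erase.mp (Finset.mem_erase.mp hu).2).1, if_neg (hP1mem u hu).2.2.2.2.1]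
  have ca2P2 : ∀ u ∈ P2, ca2f u = s2 := by
    intro u hu
    rw [hca2def]; dsimp only
    rw [if_neg (Finset.mem_erase.mp (Finset.mem_erase.mp hu).2).1, if_neg (hP2mem u hu).2.2.2.2.1]
  have cb1Q1 : ∀ u ∈ Q1, cb1f u = s2 := by
    intro u hu
    rw [hcb1def]; dsimp only; rw [if_neg (hQ1mem u hu).2.2.2.2.1]
  have cb2Q2 : ∀ u ∈ Q2, cb2f u = s2 := by
    intro u hu
    rw [hcb2def]; dsimp only; rw [if_neg (hQ2mem u hu).2.2.2.2.1]
  -- edge products of weights equal 1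
  have pcF : ∏ u ∈ F0, cF u = 1 := by
    rw [hF0, Finset.prod_insert (by simp [h01, h02, h03]),
      Finset.prod_insert (by simp [h12, h13]), Finset.prod_insert (by simp [h23]),
      Finset.prod_singleton, cF0v, cF1v, cF2v, cF3v]
    linear_combination (1/4*(s2^2) + 1/2) * hs2sq
  have pcg1 : ∏ u ∈ g1, cg1f u = 1 := by
    rw [hg1dec, Finset.prod_insert hv0nA1, cg1v0, Finset.prod_eq_pow_card cg1A1, hA1card]
    linear_combination (1/4*(s2^2) + 1/2) * hs2sq
  have pcg2 : ∏ u ∈ g2, cg2f u = 1 := by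
    rw [hg2dec, Finset.prod_insert hv1nA2, cg2v1, Finset.prod_eq_pow_card cg2A2, hA2card]
    linear_combination (1/4*(s2^2) + 1/2) * hs2sq
  have pca1 : ∏ u ∈ a1, ca1f u = 1 := by
    rw [ha1dec, Finset.prod_insert hv2nIns1, Finset.prod_insert hw1nP1, ca1v2, ca1w1,
      Finset.prod_eq_pow_card ca1P1, hP1card]
    linear_combination (1/4*(s2^2) + 1/2) * hs2sq
  have pca2 : ∏ u ∈ a2, ca2f u = 1 := by
    rw [ha2dec, Finset.prod_insert hv3nIns2, Finset.prod_insert hw2nP2, ca2v3, ca2w2,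
      Finset.prod_eq_pow_card ca2P2, hP2card]
    linear_combination (1/4*(s2^2) + 1/2) * hs2sq
  have pcb1 : ∏ u ∈ b1, cb1f u = 1 := by
    rw [hb1dec, Finset.prod_insert hw1nQ1, cb1w1, Finset.prod_eq_pow_card cb1Q1, hQ1card]
    linear_combination (1/4*(s2^2) + 1/2) * hs2sq
  have pcb2 : ∏ u ∈ b2, cb2f u = 1 := by
    rw [hb2dec, Finset.prod_insert hw2nQ2, cb2w2, Finset.prod_eq_pow_card cb2Q2, hQ2card]
    linear_combination (1/4*(s2^2) + 1/2) * hs2sq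
  -- the upper bound
  have hUB : ∀ y : V → ℝ, (∀ u, 0 ≤ y u) → y ≠ 0 →
      (Nat.factorial 4 : ℝ) * (∑ e ∈ E, ∏ u ∈ e, y u) / (∑ u, y u ^ 4) ≤ 6 * s2 := by
    intro y hynn hyne
    have hDpos : 0 < ∑ u, y u ^ 4 := by
      obtain ⟨u0, hu0⟩ := Function.ne_iff.mp hyne
      have hu0' : y u0 ≠ 0 := by simpa using hu0
      have h1 : 0 < y u0 ^ 4 := pow_pos (lt_of_le_of_ne (hynn u0) (Ne.symm hu0')) 4
      calc (0:ℝ) < y u0 ^ 4 := h1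
        _ ≤ ∑ u, y u ^ 4 :=
          Finset.single_le_sum (fun u _ => pow_nonneg (hynn u) 4) (Finset.mem_univ u0)
    rw [div_le_iff₀ hDpos, hfact4]
    have eF0 := amgm4c F0 hF0card y cF (fun u _ => hynn u)
      (fun u _ => by rw [hcFdef]; dsimp only; split_ifs <;> positivity) pcF
    have eg1 := amgm4c g1 hcg1 y cg1f (fun u _ => hynn u)
      (fun u _ => by rw [hcg1def]; dsimp only; split_ifs <;> positivity) pcg1
    have eg2 := amgm4c g2 hcg2 y cg2f (fun u _ => hynn u)
      (fun u _ => by rw [hcg2def]; dsimp only; split_ifs <;> positivity) pcg2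
    have ea1 := amgm4c a1 hca1 y ca1f (fun u _ => hynn u)
      (fun u _ => by rw [hca1def]; dsimp only; split_ifs <;> positivity) pca1
    have ea2 := amgm4c a2 hca2 y ca2f (fun u _ => hynn u)
      (fun u _ => by rw [hca2def]; dsimp only; split_ifs <;> positivity) pca2
    have eb1 := amgm4c b1 hcb1 y cb1f (fun u _ => hynn u)
      (fun u _ => by rw [hcb1def]; dsimp only; split_ifs <;> positivity) pcb1
    have eb2 := amgm4c b2 hcb2 y cb2f (fun u _ => hynn u)
      (fun u _ => by rw [hcb2def]; dsimp only; split_ifs <;> positivity) pcb2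
    have conv : ∀ (t : Finset V) (f : V → ℝ), ∑ u ∈ t, f u = ∑ u, if u ∈ t then f u else 0 :=
      fun t f => by rw [Finset.sum_ite_mem, Finset.univ_inter]
    have hptw : ∀ u : V,
        (if u ∈ F0 then cF u * y u ^ 4 else 0) + (if u ∈ g1 then cg1f u * y u ^ 4 else 0)
        + (if u ∈ g2 then cg2f u * y u ^ 4 else 0) + (if u ∈ a1 then ca1f u * y u ^ 4 else 0)
        + (if u ∈ b1 then cb1f u * y u ^ 4 else 0) + (if u ∈ a2 then ca2f u * y u ^ 4 else 0)
        + (if u ∈ b2 then cb2f u * y u ^ 4 else 0) ≤ s2 * y u ^ 4 := by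
      intro u
      have hy4 : 0 ≤ y u ^ 4 := pow_nonneg (hynn u) 4
      by_cases hF : u ∈ F0
      · have hF' := hF
        rw [hF0] at hF'
        simp only [Finset.mem_insert, Finset.mem_singleton] at hF'
        rcases hF' with rfl | rfl | rfl | rfl
        · rw [if_pos hF, if_pos hv0g1, if_neg hv0ng2, if_neg hv0na1, if_neg hv0nb1,
            if_neg hv0na2, if_neg hv0nb2, cF0v, cg1v0]
          exact le_of_eq (by ring)
        · rw [if_pos hF, if_neg hv1ng1, if_pos hv1g2, if_neg hv1na1, if_neg hv1nb1,
            if_neg hv1na2, if_neg hv1nb2, cF1v, cg2v1]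
          exact le_of_eq (by ring)
        · rw [if_pos hF, if_neg hv2ng1, if_neg hv2ng2, if_pos hv2a1, if_neg hv2nb1,
            if_neg hv2na2, if_neg hv2nb2, cF2v, ca1v2]
          exact le_of_eq (by ring)
        · rw [if_pos hF, if_neg hv3ng1, if_neg hv3ng2, if_neg hv3na1, if_neg hv3nb1,
            if_pos hv3a2, if_neg hv3nb2, cF3v, ca2v3]
          exact le_of_eq (by ring)
      · by_cases hg1m : u ∈ g1
        · obtain ⟨_, _, hng2, hna1, hnb1, hna2, hnb2⟩ :=
            hA1mem u (Finset.mem_erase.mpr ⟨by rintro rfl; exact hF hv0F, hg1m⟩)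
          have hc : cg1f u = s2 := by
            rw [hcg1def]; dsimp only; rw [if_neg (by rintro rfl; exact hF hv0F)]
          rw [if_neg hF, if_pos hg1m, if_neg hng2, if_neg hna1, if_neg hnb1, if_neg hna2,
            if_neg hnb2, hc]
          exact le_of_eq (by ring)
        · by_cases hg2m : u ∈ g2
          · obtain ⟨_, _, _, hna1, hnb1, hna2, hnb2⟩ :=
              hA2mem u (Finset.mem_erase.mpr ⟨by rintro rfl; exact hF hv1F, hg2m⟩)
            have hc : cg2f u = s2 := by
              rw [hcg2def]; dsimp only; rw [if_neg (by rintro rfl; exact hF hv1F)]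
            rw [if_neg hF, if_neg hg1m, if_pos hg2m, if_neg hna1, if_neg hnb1, if_neg hna2,
              if_neg hnb2, hc]
            exact le_of_eq (by ring)
          · by_cases ha1m : u ∈ a1
            · have hna2 : u ∉ a2 := dj a1 a2 ha1a2 u ha1m
              have hnb2 : u ∉ b2 := dj a1 b2 ha1b2 u ha1m
              by_cases hb1m : u ∈ b1
              · have hc1 : ca1f u = 3*s2/4 := by
                  rw [hca1def]; dsimp only
                  rw [if_neg (by rintro rfl; exact hF hv2F), if_pos hb1m]
                have hc2 : cb1f u = s2/4 := by rw [hcb1def]; dsimp only; rw [if_pos ha1m]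
                rw [if_neg hF, if_neg hg1m, if_neg hg2m, if_pos ha1m, if_pos hb1m,
                  if_neg hna2, if_neg hnb2, hc1, hc2]
                exact le_of_eq (by ring)
              · have hc1 : ca1f u = s2 := by
                  rw [hca1def]; dsimp only
                  rw [if_neg (by rintro rfl; exact hF hv2F), if_neg hb1m]
                rw [if_neg hF, if_neg hg1m, if_neg hg2m, if_pos ha1m, if_neg hb1m,
                  if_neg hna2, if_neg hnb2, hc1]
                exact le_of_eq (by ring)
            · by_cases hb1m : u ∈ b1
              · have hna2 : u ∉ a2 := fun h => dj a2 b1 ha2b1 u h hb1m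
                have hnb2 : u ∉ b2 := dj b1 b2 hb1b2 u hb1m
                have hc : cb1f u = s2 := by rw [hcb1def]; dsimp only; rw [if_neg ha1m]
                rw [if_neg hF, if_neg hg1m, if_neg hg2m, if_neg ha1m, if_pos hb1m,
                  if_neg hna2, if_neg hnb2, hc]
                exact le_of_eq (by ring)
              · by_cases ha2m : u ∈ a2
                · by_cases hb2m : u ∈ b2
                  · have hc1 : ca2f u = 3*s2/4 := by
                      rw [hca2def]; dsimp only
                      rw [if_neg (by rintro rfl; exact hF hv3F), if_pos hb2m]
                    have hc2 : cb2f u = s2/4 := by rw [hcb2def]; dsimp only; rw [if_pos ha2m]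
                    rw [if_neg hF, if_neg hg1m, if_neg hg2m, if_neg ha1m, if_neg hb1m,
                      if_pos ha2m, if_pos hb2m, hc1, hc2]
                    exact le_of_eq (by ring)
                  · have hc1 : ca2f u = s2 := by
                      rw [hca2def]; dsimp only
                      rw [if_neg (by rintro rfl; exact hF hv3F), if_neg hb2m]
                    rw [if_neg hF, if_neg hg1m, if_neg hg2m, if_neg ha1m, if_neg hb1m,
                      if_pos ha2m, if_neg hb2m, hc1]
                    exact le_of_eq (by ring)
                · by_cases hb2m : u ∈ b2
                  · have hc : cb2f u = s2 := by rw [hcb2def]; dsimp only; rw [if_neg ha2m]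
                    rw [if_neg hF, if_neg hg1m, if_neg hg2m, if_neg ha1m, if_neg hb1m,
                      if_neg ha2m, if_pos hb2m, hc]
                    exact le_of_eq (by ring)
                  · rw [if_neg hF, if_neg hg1m, if_neg hg2m, if_neg ha1m, if_neg hb1m,
                      if_neg ha2m, if_neg hb2m]
                    have : (0:ℝ) ≤ s2 * y u ^ 4 := mul_nonneg hs2nn hy4
                    linarith
    calc (24:ℝ) * (∑ e ∈ E, ∏ u ∈ e, y u)
        = 24 * ((∏ u ∈ F0, y u) + (∏ u ∈ g1, y u) + (∏ u ∈ g2, y u) + (∏ u ∈ a1, y u)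
            + (∏ u ∈ b1, y u) + (∏ u ∈ a2, y u) + (∏ u ∈ b2, y u)) := by
          rw [hEsum (fun e => ∏ u ∈ e, y u)]
      _ ≤ 24 * ((1/4) * ∑ u ∈ F0, cF u * y u ^ 4 + (1/4) * ∑ u ∈ g1, cg1f u * y u ^ 4
            + (1/4) * ∑ u ∈ g2, cg2f u * y u ^ 4 + (1/4) * ∑ u ∈ a1, ca1f u * y u ^ 4
            + (1/4) * ∑ u ∈ b1, cb1f u * y u ^ 4 + (1/4) * ∑ u ∈ a2, ca2f u * y u ^ 4
            + (1/4) * ∑ u ∈ b2, cb2f u * y u ^ 4) :=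
          mul_le_mul_of_nonneg_left
            (add_le_add (add_le_add (add_le_add (add_le_add (add_le_add (add_le_add
              eF0 eg1) eg2) ea1) eb1) ea2) eb2) (by norm_num)
      _ = 6 * (∑ u, ((if u ∈ F0 then cF u * y u ^ 4 else 0)
            + (if u ∈ g1 then cg1f u * y u ^ 4 else 0)
            + (if u ∈ g2 then cg2f u * y u ^ 4 else 0)
            + (if u ∈ a1 then ca1f u * y u ^ 4 else 0)
            + (if u ∈ b1 then cb1f u * y u ^ 4 else 0)
            + (if u ∈ a2 then ca2f u * y u ^ 4 else 0)
            + (if u ∈ b2 then cb2f u * y u ^ 4 else 0))) := by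
          rw [conv F0, conv g1, conv g2, conv a1, conv b1, conv a2, conv b2,
            Finset.sum_add_distrib, Finset.sum_add_distrib, Finset.sum_add_distrib,
            Finset.sum_add_distrib, Finset.sum_add_distrib, Finset.sum_add_distrib]
          ring
      _ ≤ 6 * (∑ u, s2 * y u ^ 4) := by
          have h := Finset.sum_le_sum (fun u (_ : u ∈ Finset.univ) => hptw u)
          linarith
      _ = 6 * s2 * (∑ u, y u ^ 4) := by rw [← Finset.mul_sum]; ring
  -- conclusion
  have hmem : ∃ xx : V → ℝ, (∀ u, 0 ≤ xx u) ∧ xx ≠ 0 ∧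
      6 * s2 = (Nat.factorial 4 : ℝ) * (∑ e ∈ E, ∏ u ∈ e, xx u) / (∑ u, xx u ^ 4) :=
    ⟨x0, hx0nn, hx0ne, by rw [hN, hD, hfact4]; ring⟩
  have hRHS : (Nat.factorial 3 : ℝ) * (4:ℝ) ^ ((1:ℝ)/4) = 6 * s2 := by
    rw [rpow_quarter_eq hs2nn (by linear_combination (s2^2 + 2) * hs2sq : s2 ^ 4 = 4)]
    norm_num [Nat.factorial]
  unfold specRad
  rw [hRHS]
  refine le_antisymm (csSup_le ⟨6 * s2, hmem⟩ ?_) (le_csSup ⟨6 * s2, ?_⟩ hmem)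
  · rintro ρ ⟨y, hy1, hy2, rfl⟩
    exact hUB y hy1 hy2
  · rintro ρ ⟨y, hy1, hy2, rfl⟩
    exact hUB y hy1 hy2
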